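/- Fix ε ∈ (0, 1/2) and δ > 0, and let (ℓₙ, uₙ) be a sequence with g_ε(ℓₙ, uₙ) = δ for all n and ℓₙ ↓ −∞. Suppose additionally uₙ is bounded below by Φ^{−1}(1−ε) and bounded above. Then uₙ → u*, where u* is the unique solution of ḡ(u) = δ with ḡ(u) = ∫₀^∞ max{Φ(u − t) − (1 − ε), 0} dt. -/

import Mathlib

open MeasureTheory Set

/-- The standard Gaussian cumulative distribution function. -/
noncomputable def Phi (x : ℝ) : ℝ :=
  (∫ s in Set.Iic x, Real.exp (-s ^ 2 / 2)) / Real.sqrt (2 * Real.pi)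

/-- `g ε ℓ u = ∫₀^∞ max{Φ(u − t) − Φ(ℓ + t) − (1 − ε), 0} dt`. -/
noncomputable def g (ε ℓ u : ℝ) : ℝ :=
  ∫ t in Set.Ioi (0:ℝ), max (Phi (u - t) - Phi (ℓ + t) - (1 - ε)) 0

noncomputable def gbar (ε u : ℝ) : ℝ :=
  ∫ t in Set.Ioi (0:ℝ), max (Phi (u - t) - (1 - ε)) 0

/-!
Since `Φ ≥ 0`, `g ε ℓ ≤ ḡ`, and `ḡ` is strictly increasing above `q = Φ⁻¹(1 - ε)`; hence
`ḡ (uₙ) ≥ g ε ℓₙ uₙ = δ = ḡ (u*)` forces `uₙ ≥ u*`. Conversely, for `u' > u*` dominated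
convergence (all integrands are dominated by `Φ u' · 𝟙_(0, u' - q]`) gives
`g ε ℓₙ u' → ḡ u' > δ`, so eventually `g ε ℓₙ u' > δ = g ε ℓₙ uₙ`, and
monotonicity of `g` in `u` forces `uₙ < u'`.
-/

open Filter Topology

lemma integrable_exp_neg_sq_div_two : Integrable (fun s : ℝ => Real.exp (-s ^ 2 / 2)) := by
  convert integrable_exp_neg_mul_sq (by norm_num : (0:ℝ) < 1 / 2) using 2
  ring_nf

lemma Phi_nonneg (x : ℝ) : 0 ≤ Phi x :=
  div_nonneg (setIntegral_nonneg measurableSet_Iic fun _ _ => (Real.exp_pos _).le)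
    (Real.sqrt_nonneg _)

lemma Phi_sub_Phi (x y : ℝ) :
    Phi y - Phi x = (∫ s in x..y, Real.exp (-s ^ 2 / 2)) / Real.sqrt (2 * Real.pi) := by
  rw [Phi, Phi, ← sub_div, intervalIntegral.integral_Iic_sub_Iic
    integrable_exp_neg_sq_div_two.integrableOn integrable_exp_neg_sq_div_two.integrableOn]

lemma Phi_strictMono : StrictMono Phi := fun x y hxy => by
  have hpos : 0 < ∫ s in x..y, Real.exp (-s ^ 2 / 2) :=
    intervalIntegral.intervalIntegral_pos_of_pos
      integrable_exp_neg_sq_div_two.intervalIntegrable (fun _ => Real.exp_pos _) hxy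
  exact sub_pos.1 (Phi_sub_Phi x y ▸ div_pos hpos (by positivity))

lemma Phi_monotone : Monotone Phi := Phi_strictMono.monotone

lemma tendsto_Phi_atBot : Tendsto Phi atBot (𝓝 0) := by
  have hI : Tendsto (fun x => ∫ s in x..0, Real.exp (-s ^ 2 / 2)) atBot
      (𝓝 (∫ s in Iic 0, Real.exp (-s ^ 2 / 2))) :=
    intervalIntegral_tendsto_integral_Iic 0 integrable_exp_neg_sq_div_two.integrableOn tendsto_id
  have hPhi : Tendsto (fun x => Phi 0 - Phi x) atBot (𝓝 (Phi 0)) := by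
    simp_rw [Phi_sub_Phi]
    exact hI.div_const _
  simpa using (tendsto_const_nhds (x := Phi 0)).sub hPhi

lemma setIntegral_lt_setIntegral_of_lt_on_Ioo {f h : ℝ → ℝ} {s : Set ℝ} (hs : MeasurableSet s)
    (hf : IntegrableOn f s) (hh : IntegrableOn h s) (hle : ∀ t ∈ s, f t ≤ h t)
    {a b : ℝ} (hab : a < b) (hsub : Ioo a b ⊆ s) (hlt : ∀ t ∈ Ioo a b, f t < h t) :
    ∫ t in s, f t < ∫ t in s, h t := by
  rw [← sub_pos, ← integral_sub hh hf, setIntegral_pos_iff_support_of_nonneg_ae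
    ((ae_restrict_iff' hs).2 (Eventually.of_forall fun t ht => sub_nonneg.2 (hle t ht)))
    (hh.sub hf)]
  refine ((Measure.measure_Ioo_pos _).2 hab).trans_le (measure_mono fun t ht => ⟨?_, hsub ht⟩)
  exact Function.mem_support.2 (sub_pos.2 (hlt t ht)).ne'

section Curves

variable {ε q : ℝ}

lemma gbar_integrand_le_indicator (hq : Phi q = 1 - ε) (u : ℝ) {t : ℝ} (ht : 0 < t) :
    max (Phi (u - t) - (1 - ε)) 0 ≤ (Ioc 0 (u - q)).indicator (fun _ => Phi u) t := by
  rcases le_or_gt t (u - q) with htq | htq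
  · rw [indicator_of_mem (show t ∈ Ioc 0 (u - q) from ⟨ht, htq⟩)]
    have := Phi_monotone (by linarith : u - t ≤ u)
    exact max_le (by linarith [Phi_nonneg q]) (Phi_nonneg u)
  · rw [indicator_of_notMem fun hm => htq.not_ge hm.2]
    have := Phi_monotone (by linarith : u - t ≤ q)
    exact max_le (by linarith) le_rfl

lemma g_integrand_le_gbar_integrand (ℓ u t : ℝ) :
    max (Phi (u - t) - Phi (ℓ + t) - (1 - ε)) 0 ≤ max (Phi (u - t) - (1 - ε)) 0 :=
  max_le_max (by linarith [Phi_nonneg (ℓ + t)]) le_rfl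

lemma integrableOn_indicator_Ioc_const (q u : ℝ) :
    IntegrableOn ((Ioc 0 (u - q)).indicator fun _ => Phi u) (Ioi 0) :=
  ((integrable_indicator_iff measurableSet_Ioc).2
    (integrableOn_const measure_Ioc_lt_top.ne)).integrableOn

lemma integrableOn_gbar_integrand (hq : Phi q = 1 - ε) (u : ℝ) :
    IntegrableOn (fun t => max (Phi (u - t) - (1 - ε)) 0) (Ioi 0) := by
  refine (integrableOn_indicator_Ioc_const q u).mono' ?_ ?_
  · exact ((Phi_monotone.measurable.comp (measurable_const.sub measurable_id)).sub
      measurable_const).max measurable_const |>.aestronglyMeasurable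
  · refine (ae_restrict_iff' measurableSet_Ioi).2 (Eventually.of_forall fun t ht => ?_)
    rw [Real.norm_of_nonneg (le_max_right _ _)]
    exact gbar_integrand_le_indicator hq u ht

lemma integrableOn_g_integrand (hq : Phi q = 1 - ε) (ℓ u : ℝ) :
    IntegrableOn (fun t => max (Phi (u - t) - Phi (ℓ + t) - (1 - ε)) 0) (Ioi 0) := by
  refine (integrableOn_gbar_integrand hq u).mono' ?_ (Eventually.of_forall fun t => ?_)
  · exact (((Phi_monotone.measurable.comp (measurable_const.sub measurable_id)).sub
      (Phi_monotone.measurable.comp (measurable_const.add measurable_id))).sub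
      measurable_const).max measurable_const |>.aestronglyMeasurable
  · rw [Real.norm_of_nonneg (le_max_right _ _)]
    exact g_integrand_le_gbar_integrand ℓ u t

lemma g_le_gbar (hq : Phi q = 1 - ε) (ℓ u : ℝ) : g ε ℓ u ≤ gbar ε u :=
  setIntegral_mono (integrableOn_g_integrand hq ℓ u) (integrableOn_gbar_integrand hq u)
    (g_integrand_le_gbar_integrand ℓ u)

lemma g_monotone (hq : Phi q = 1 - ε) (ℓ : ℝ) : Monotone (g ε ℓ) := fun a b hab =>
  setIntegral_mono (integrableOn_g_integrand hq ℓ a) (integrableOn_g_integrand hq ℓ b)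
    fun t => max_le_max (by linarith [Phi_monotone (sub_le_sub_right hab t)]) le_rfl

lemma gbar_strictMonoOn (hq : Phi q = 1 - ε) : StrictMonoOn (gbar ε) (Ici q) := by
  intro a ha b _ hab
  refine setIntegral_lt_setIntegral_of_lt_on_Ioo measurableSet_Ioi
    (integrableOn_gbar_integrand hq a) (integrableOn_gbar_integrand hq b)
    (fun t _ => max_le_max (by linarith [Phi_monotone (sub_le_sub_right hab.le t)]) le_rfl)
    (by linarith : a - q < b - q) (fun t ht => lt_of_le_of_lt (by linarith [mem_Ici.1 ha]) ht.1)
    fun t ht => ?_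
  have hat : Phi (a - t) ≤ Phi q := Phi_monotone (by linarith [ht.1])
  have hbt : Phi q < Phi (b - t) := Phi_strictMono (by linarith [ht.2])
  rw [max_eq_right (by linarith)]
  exact lt_max_of_lt_left (by linarith)

lemma tendsto_g_atBot (hq : Phi q = 1 - ε) (u : ℝ) :
    Tendsto (fun ℓ => g ε ℓ u) atBot (𝓝 (gbar ε u)) := by
  refine tendsto_integral_filter_of_dominated_convergence _
    (Eventually.of_forall fun ℓ => (integrableOn_g_integrand hq ℓ u).aestronglyMeasurable)
    (Eventually.of_forall fun ℓ => (ae_restrict_iff' measurableSet_Ioi).2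
      (Eventually.of_forall fun t ht => ?_))
    (integrableOn_indicator_Ioc_const q u) (Eventually.of_forall fun t => ?_)
  · rw [Real.norm_of_nonneg (le_max_right _ _)]
    exact (g_integrand_le_gbar_integrand ℓ u t).trans (gbar_integrand_le_indicator hq u ht)
  · have hΦ : Tendsto (fun ℓ => Phi (ℓ + t)) atBot (𝓝 0) :=
      tendsto_Phi_atBot.comp (tendsto_atBot_add_const_right _ t tendsto_id)
    simpa using ((tendsto_const_nhds.sub hΦ).sub tendsto_const_nhds).max tendsto_const_nhds

end Curves

theorem stmt_12_general (ε δ : ℝ)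
    (q : ℝ) (hq : Phi q = 1 - ε)
    (ℓ u : ℕ → ℝ) (hcurve : ∀ n, g ε (ℓ n) (u n) = δ)
    (hℓbot : Filter.Tendsto ℓ Filter.atTop Filter.atBot)
    (hlb : ∀ n, q ≤ u n)
    (ustar : ℝ) (hustar : q < ustar ∧ gbar ε ustar = δ) :
    Filter.Tendsto u Filter.atTop (nhds ustar) := by
  obtain ⟨hq_ustar, hgbar⟩ := hustar
  have hlow : ∀ n, ustar ≤ u n := fun n => not_lt.1 fun hlt => by
    have := gbar_strictMonoOn hq (hlb n) hq_ustar.le hlt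
    linarith [g_le_gbar hq (ℓ n) (u n), hcurve n]
  refine tendsto_order.2 ⟨fun a ha => Eventually.of_forall fun n => ha.trans_le (hlow n),
    fun b hb => ?_⟩
  have hδb : δ < gbar ε b := hgbar ▸ gbar_strictMonoOn hq hq_ustar.le (hq_ustar.trans hb).le hb
  filter_upwards [((tendsto_g_atBot hq b).comp hℓbot).eventually (eventually_gt_nhds hδb)]
    with n hn
  exact not_le.1 fun hle => (hcurve n ▸ g_monotone hq (ℓ n) hle).not_gt hn

theorem stmt_12 (ε δ : ℝ) (hε : ε ∈ Set.Ioo (0:ℝ) (1/2)) (hδ : 0 < δ)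
    (q : ℝ) (hq : Phi q = 1 - ε)
    (ℓ u : ℕ → ℝ) (hcurve : ∀ n, g ε (ℓ n) (u n) = δ)
    (hℓanti : Antitone ℓ) (hℓbot : Filter.Tendsto ℓ Filter.atTop Filter.atBot)
    (hlb : ∀ n, q ≤ u n) (hub : ∃ C : ℝ, ∀ n, u n ≤ C)
    (ustar : ℝ) (hustar : q < ustar ∧ gbar ε ustar = δ) :
    Filter.Tendsto u Filter.atTop (nhds ustar) :=
  stmt_12_general ε δ q hq ℓ u hcurve hℓbot hlb ustar hustar
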